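/- Suppose y = Φ x_true + n with ‖n‖₂ ≤ ε, where x_true ∈ {0,1}^N is binary with exactly s nonzero entries, and Φ satisfies the bounded restricted isometry property of order 2s with constant δ_{2s}^b < √2 - 1. Let x* be any optimal solution of the convex program: minimize ‖x‖₁ subject to ‖Φx - y‖₂ ≤ ε and 0 ≤ x ≤ 1 componentwise. Then ‖x* - x_true‖₂ ≤ (4√(1+δ_{2s}^b) / (1 - (√2+1)δ_{2s}^b)) · ε. -/

import Mathlib

noncomputable def l2 {n : ℕ} (x : Fin n → ℝ) : ℝ := Real.sqrt (∑ i, (x i) ^ 2)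
def l1 {n : ℕ} (x : Fin n → ℝ) : ℝ := ∑ i, |x i|

/-!
Put `h = x* - x_true`. Both vectors lie in the unit box, so every entry of `h` lies in `[-1, 1]`;
this is what lets the bounded RIP take the place of the RIP in Candès' argument. Minimality of
`‖x*‖₁` gives the cone condition `‖h_{T₀ᶜ}‖₁ ≤ ‖h_{T₀}‖₁` on the support `T₀` of `x_true`, and
feasibility of both vectors gives `‖Φh‖₂ ≤ 2ε`. Cut `T₀ᶜ` into blocks of `s` indices in decreasing
order of `|hᵢ|` and let `T₀₁` be `T₀` together with the first block; the remaining blocks have total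
`ℓ²`-norm at most `‖h_{T₀}‖₁ / √s ≤ ‖h_{T₀₁}‖₂`, whence `‖h‖₂ ≤ 2‖h_{T₀₁}‖₂`. Polarising the BRIP on
normalised vectors gives `|⟪Φu, Φv⟫| ≤ δ‖u‖‖v‖` for disjointly supported `s`-sparse `u`, `v`, and
expanding `‖Φh_{T₀₁}‖²` against `Φh` then yields `(1 - (√2 + 1)δ)‖h_{T₀₁}‖₂ ≤ 2√(1 + δ)ε`.
-/

open Finset Function Matrix

section L2

variable {n : ℕ}

theorem l2_eq_norm (x : Fin n → ℝ) : l2 x = ‖WithLp.toLp 2 x‖ := by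
  simp [l2, EuclideanSpace.norm_eq]

theorem l2_nonneg (x : Fin n → ℝ) : 0 ≤ l2 x := Real.sqrt_nonneg _

theorem l2_sq (x : Fin n → ℝ) : l2 x ^ 2 = x ⬝ᵥ x :=
  (Real.sq_sqrt (by positivity)).trans (by simp [dotProduct, sq])

theorem l2_zero : l2 (0 : Fin n → ℝ) = 0 := by simp [l2]

theorem l2_neg (x : Fin n → ℝ) : l2 (-x) = l2 x := by
  simp only [l2_eq_norm, WithLp.toLp_neg, norm_neg]

theorem l2_smul (c : ℝ) (x : Fin n → ℝ) : l2 (c • x) = |c| * l2 x := by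
  simp only [l2_eq_norm, WithLp.toLp_smul, norm_smul, Real.norm_eq_abs]

theorem l2_add_le (x y : Fin n → ℝ) : l2 (x + y) ≤ l2 x + l2 y := by
  simpa only [l2_eq_norm, WithLp.toLp_add] using norm_add_le _ _

theorem l2_sum_le {ι : Type*} (J : Finset ι) (f : ι → Fin n → ℝ) :
    l2 (∑ j ∈ J, f j) ≤ ∑ j ∈ J, l2 (f j) := by
  simpa only [l2_eq_norm, WithLp.toLp_sum] using norm_sum_le _ _

theorem l2_eq_zero {x : Fin n → ℝ} : l2 x = 0 ↔ x = 0 := by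
  rw [l2_eq_norm, norm_eq_zero, WithLp.toLp_eq_zero]

theorem abs_le_l2 (x : Fin n → ℝ) (i : Fin n) : |x i| ≤ l2 x := by
  simpa [l2_eq_norm] using PiLp.norm_apply_le (WithLp.toLp 2 x) i

theorem dotProduct_le_l2_mul_l2 (x y : Fin n → ℝ) : x ⬝ᵥ y ≤ l2 x * l2 y := by
  simpa [l2_eq_norm, EuclideanSpace.inner_eq_star_dotProduct, dotProduct_comm]
    using real_inner_le_norm (WithLp.toLp 2 x) (WithLp.toLp 2 y)

theorem dotProduct_eq_zero_of_disjoint {x y : Fin n → ℝ}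
    (hxy : Disjoint (support x) (support y)) : x ⬝ᵥ y = 0 :=
  sum_eq_zero fun i _ => by
    by_contra h
    exact hxy.ne_of_mem (left_ne_zero_of_mul h) (right_ne_zero_of_mul h) rfl

theorem l2_sq_add_of_disjoint {x y : Fin n → ℝ} (hxy : Disjoint (support x) (support y)) :
    l2 (x + y) ^ 2 = l2 x ^ 2 + l2 y ^ 2 := by
  simp only [l2_sq, dotProduct_add, add_dotProduct, dotProduct_eq_zero_of_disjoint hxy,
    dotProduct_eq_zero_of_disjoint hxy.symm]
  ring

theorem l2_le_l2_add_of_disjoint {x y : Fin n → ℝ} (hxy : Disjoint (support x) (support y)) :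
    l2 x ≤ l2 (x + y) :=
  le_of_sq_le_sq
    (by rw [l2_sq_add_of_disjoint hxy]; nlinarith [sq_nonneg (l2 y)]) (l2_nonneg _)

theorem l2_add_l2_le_sqrt_two_mul_of_disjoint {x y : Fin n → ℝ}
    (hxy : Disjoint (support x) (support y)) : l2 x + l2 y ≤ √2 * l2 (x + y) :=
  le_of_sq_le_sq (by
    rw [mul_pow, Real.sq_sqrt zero_le_two, l2_sq_add_of_disjoint hxy]
    nlinarith [sq_nonneg (l2 x - l2 y)]) (mul_nonneg (Real.sqrt_nonneg _) (l2_nonneg _))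

theorem l2_sq_indicator (T : Finset (Fin n)) (x : Fin n → ℝ) :
    l2 ((T : Set (Fin n)).indicator x) ^ 2 = ∑ i ∈ T, x i ^ 2 := by
  rw [l2_sq, dotProduct, ← sum_indicator_subset _ (subset_univ T)]
  refine sum_congr rfl fun i _ => ?_
  by_cases hi : i ∈ (T : Set (Fin n)) <;> simp [hi, sq]

end L2

def IsBRIP {M N : ℕ} (Φ : Matrix (Fin M) (Fin N) ℝ) (k : ℕ) (δ : ℝ) : Prop :=
  ∀ v : Fin N → ℝ, (support v).ncard ≤ k → (∀ i, |v i| ≤ 1) →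
    (1 - δ) * l2 v ^ 2 ≤ l2 (Φ *ᵥ v) ^ 2 ∧ l2 (Φ *ᵥ v) ^ 2 ≤ (1 + δ) * l2 v ^ 2

namespace IsBRIP

variable {M N k : ℕ} {Φ : Matrix (Fin M) (Fin N) ℝ} {δ : ℝ} {u v : Fin N → ℝ}

theorem l2_sq_mulVec_add_mem_Icc (hΦ : IsBRIP Φ k δ) (huv : Disjoint (support u) (support v))
    (hk : (support u).ncard + (support v).ncard ≤ k) (hu : l2 u = 1) (hv : l2 v = 1) :
    l2 (Φ *ᵥ (u + v)) ^ 2 ∈ Set.Icc (2 * (1 - δ)) (2 * (1 + δ)) := by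
  have hsparse : (support (u + v)).ncard ≤ k :=
    ((Set.ncard_le_ncard (support_add u v) (Set.toFinite _)).trans
      (Set.ncard_union_le _ _)).trans hk
  -- entries of unit vectors lie in `[-1, 1]`, which is where the bounded RIP applies
  have hbox : ∀ i, |(u + v) i| ≤ 1 := fun i => by
    by_cases hi : u i = 0
    · simpa [hi, hv] using abs_le_l2 v i
    · have hvi : v i = 0 := notMem_support.mp (Set.disjoint_left.mp huv hi)
      simpa [hvi, hu] using abs_le_l2 u i
  have hnorm : l2 (u + v) ^ 2 = 2 := by
    rw [l2_sq_add_of_disjoint huv, hu, hv]; norm_num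
  simpa [hnorm, mul_comm] using hΦ (u + v) hsparse hbox

theorem abs_dotProduct_mulVec_le_of_l2_eq_one (hΦ : IsBRIP Φ k δ)
    (huv : Disjoint (support u) (support v)) (hk : (support u).ncard + (support v).ncard ≤ k)
    (hu : l2 u = 1) (hv : l2 v = 1) : |(Φ *ᵥ u) ⬝ᵥ (Φ *ᵥ v)| ≤ δ := by
  obtain ⟨hplus₁, hplus₂⟩ := hΦ.l2_sq_mulVec_add_mem_Icc huv hk hu hv
  obtain ⟨hminus₁, hminus₂⟩ := hΦ.l2_sq_mulVec_add_mem_Icc (v := -v) (by rwa [support_neg])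
    (by rwa [support_neg]) hu (by rwa [l2_neg])
  have hpolar : 4 * ((Φ *ᵥ u) ⬝ᵥ (Φ *ᵥ v)) =
      l2 (Φ *ᵥ (u + v)) ^ 2 - l2 (Φ *ᵥ (u + -v)) ^ 2 := by
    simp only [l2_sq, mulVec_add, mulVec_neg, dotProduct_add, add_dotProduct,
      dotProduct_neg, neg_dotProduct, dotProduct_comm (Φ *ᵥ v)]
    ring
  rw [abs_le]
  constructor <;> linarith

theorem abs_dotProduct_mulVec_le (hΦ : IsBRIP Φ k δ)
    (huv : Disjoint (support u) (support v)) (hk : (support u).ncard + (support v).ncard ≤ k) :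
    |(Φ *ᵥ u) ⬝ᵥ (Φ *ᵥ v)| ≤ δ * (l2 u * l2 v) := by
  rcases eq_or_ne u 0 with rfl | hu
  · simp [l2_zero]
  rcases eq_or_ne v 0 with rfl | hv
  · simp [l2_zero]
  have hu₀ : 0 < l2 u := (l2_nonneg u).lt_of_ne' (l2_eq_zero.not.mpr hu)
  have hv₀ : 0 < l2 v := (l2_nonneg v).lt_of_ne' (l2_eq_zero.not.mpr hv)
  have hunit : ∀ w : Fin N → ℝ, 0 < l2 w → l2 ((l2 w)⁻¹ • w) = 1 := fun w hw => by
    rw [l2_smul, abs_inv, abs_of_pos hw, inv_mul_cancel₀ hw.ne']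
  have hsu : support ((l2 u)⁻¹ • u) = support u :=
    support_const_smul_of_ne_zero _ _ (inv_ne_zero hu₀.ne')
  have hsv : support ((l2 v)⁻¹ • v) = support v :=
    support_const_smul_of_ne_zero _ _ (inv_ne_zero hv₀.ne')
  have h := hΦ.abs_dotProduct_mulVec_le_of_l2_eq_one (by rwa [hsu, hsv]) (by rwa [hsu, hsv])
    (hunit u hu₀) (hunit v hv₀)
  rwa [mulVec_smul, mulVec_smul, smul_dotProduct, dotProduct_smul, smul_eq_mul, smul_eq_mul,
    ← mul_assoc, abs_mul, ← mul_inv, abs_inv, abs_of_pos (mul_pos hu₀ hv₀),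
    inv_mul_le_iff₀ (mul_pos hu₀ hv₀), mul_comm] at h

theorem abs_dotProduct_mulVec_add_le {s : ℕ} (hΦ : IsBRIP Φ (2 * s) δ) {a b w : Fin N → ℝ}
    (ha : (support a).ncard ≤ s) (hb : (support b).ncard ≤ s) (hw : (support w).ncard ≤ s)
    (haw : Disjoint (support a) (support w)) (hbw : Disjoint (support b) (support w)) :
    |(Φ *ᵥ (a + b)) ⬝ᵥ (Φ *ᵥ w)| ≤ δ * (l2 a + l2 b) * l2 w := by
  rw [mulVec_add, add_dotProduct]
  calc _ ≤ |(Φ *ᵥ a) ⬝ᵥ (Φ *ᵥ w)| + |(Φ *ᵥ b) ⬝ᵥ (Φ *ᵥ w)| := abs_add_le _ _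
    _ ≤ δ * (l2 a * l2 w) + δ * (l2 b * l2 w) :=
      add_le_add (hΦ.abs_dotProduct_mulVec_le haw (by omega))
        (hΦ.abs_dotProduct_mulVec_le hbw (by omega))
    _ = δ * (l2 a + l2 b) * l2 w := by ring

theorem mul_l2_add_le_of_sum_l2_le {s : ℕ} (hΦ : IsBRIP Φ (2 * s) δ) {a b : Fin N → ℝ} {ι : Type*}
    {J : Finset ι} {g : ι → Fin N → ℝ} (ha : (support a).ncard ≤ s) (hb : (support b).ncard ≤ s)
    (hg : ∀ j ∈ J, (support (g j)).ncard ≤ s) (hab : Disjoint (support a) (support b))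
    (hag : ∀ j ∈ J, Disjoint (support a) (support (g j)))
    (hbg : ∀ j ∈ J, Disjoint (support b) (support (g j)))
    (hbox : ∀ i, |(a + b) i| ≤ 1) (htail : ∑ j ∈ J, l2 (g j) ≤ l2 a) :
    (1 - (√2 + 1) * δ) * l2 (a + b) ≤ √(1 + δ) * l2 (Φ *ᵥ (a + b + ∑ j ∈ J, g j)) := by
  have hsparse : (support (a + b)).ncard ≤ 2 * s :=
    ((Set.ncard_le_ncard (support_add a b) (Set.toFinite _)).trans
      (Set.ncard_union_le _ _)).trans (by omega)
  obtain ⟨hlow, hup⟩ := hΦ (a + b) hsparse hbox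
  set α := l2 (a + b)
  set R := l2 (Φ *ᵥ (a + b + ∑ j ∈ J, g j))
  rcases (l2_nonneg (a + b)).eq_or_lt with hα | hα
  · rw [show α = 0 from hα.symm, mul_zero]
    exact mul_nonneg (Real.sqrt_nonneg _) (l2_nonneg _)
  -- the two BRIP bounds at the nonzero vector `a + b` are compatible only if `δ ≥ 0`
  have hδ : 0 ≤ δ := by nlinarith [pow_pos hα 2]
  have hΦab : l2 (Φ *ᵥ (a + b)) ≤ √(1 + δ) * α :=
    le_of_sq_le_sq (by rwa [mul_pow, Real.sq_sqrt (by linarith)]) (by positivity)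
  have hαa : l2 a ≤ α := l2_le_l2_add_of_disjoint hab
  have hcross : ∀ j ∈ J,
      -((Φ *ᵥ (a + b)) ⬝ᵥ (Φ *ᵥ g j)) ≤ δ * (l2 a + l2 b) * l2 (g j) := fun j hj =>
    (neg_le_abs _).trans (hΦ.abs_dotProduct_mulVec_add_le ha hb (hg j hj) (hag j hj) (hbg j hj))
  have henergy : (1 - δ) * α ^ 2 ≤ √(1 + δ) * α * R + δ * (√2 * α) * α := calc
    (1 - δ) * α ^ 2 ≤ l2 (Φ *ᵥ (a + b)) ^ 2 := hlow
    _ = (Φ *ᵥ (a + b)) ⬝ᵥ (Φ *ᵥ (a + b + ∑ j ∈ J, g j))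
          + ∑ j ∈ J, -((Φ *ᵥ (a + b)) ⬝ᵥ (Φ *ᵥ g j)) := by
      rw [l2_sq, mulVec_add _ (a + b), mulVec_sum, dotProduct_add, dotProduct_sum,
        sum_neg_distrib, add_neg_cancel_right]
    _ ≤ l2 (Φ *ᵥ (a + b)) * R + ∑ j ∈ J, δ * (l2 a + l2 b) * l2 (g j) :=
      add_le_add (dotProduct_le_l2_mul_l2 _ _) (sum_le_sum hcross)
    _ ≤ √(1 + δ) * α * R + δ * (√2 * α) * α := by
      rw [← mul_sum]
      gcongr ?_ + δ * ?_ * ?_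
      · exact mul_le_mul_of_nonneg_right hΦab (l2_nonneg _)
      · exact sum_nonneg fun j _ => l2_nonneg _
      · exact l2_add_l2_le_sqrt_two_mul_of_disjoint hab
      · exact htail.trans hαa
  exact le_of_mul_le_mul_left (by linear_combination henergy) hα

end IsBRIP

section Indicator

variable {α : Type*}

theorem ncard_support_indicator_le {M : Type*} [Zero M] (U : Finset α) (f : α → M) :
    (support ((U : Set α).indicator f)).ncard ≤ #U :=
  (Set.ncard_le_ncard Set.support_indicator_subset (Set.toFinite _)).trans
    (Set.ncard_coe_finset U).le

theorem disjoint_support_indicator {M : Type*} [Zero M] {U V : Finset α} (hUV : Disjoint U V)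
    (f g : α → M) :
    Disjoint (support ((U : Set α).indicator f)) (support ((V : Set α).indicator g)) :=
  (disjoint_coe.mpr hUV).mono Set.support_indicator_subset Set.support_indicator_subset

theorem indicator_add_sum_indicator_eq_self {ι M : Type*} [Fintype α] [DecidableEq α]
    [AddCommMonoid M] {T₀ : Finset α} {J : Finset ι} {T : ι → Finset α}
    (hcover : J.biUnion T = T₀ᶜ) (hdisj : Pairwise (Disjoint on T)) (f : α → M) :
    (T₀ : Set α).indicator f + ∑ j ∈ J, (T j : Set α).indicator f = f := by
  have hpd : (J : Set ι).PairwiseDisjoint fun j => (T j : Set α) :=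
    fun i _ j _ hij => disjoint_coe.mpr (hdisj hij)
  have hunion : ⋃ j ∈ J, (T j : Set α) = (T₀ : Set α)ᶜ := by
    simp only [← coe_compl, ← hcover, coe_biUnion, mem_coe]
  rw [sum_fn, ← indicator_biUnion _ _ hpd, hunion, Set.indicator_self_add_compl]

end Indicator

section L1

variable {n : ℕ}

theorem sum_abs_le_sqrt_card_mul_l2_indicator (T : Finset (Fin n)) (f : Fin n → ℝ) :
    ∑ i ∈ T, |f i| ≤ √(#T : ℝ) * l2 ((T : Set (Fin n)).indicator f) :=
  le_of_sq_le_sq (by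
    rw [mul_pow, Real.sq_sqrt (Nat.cast_nonneg _), l2_sq_indicator]
    simpa only [sq_abs] using sq_sum_le_card_mul_sum_sq (s := T) (f := fun i => |f i|))
    (mul_nonneg (Real.sqrt_nonneg _) (l2_nonneg _))

theorem sum_abs_div_sqrt_le_l2_indicator {s : ℕ} (hs : 0 < s) {T : Finset (Fin n)} (hT : #T ≤ s)
    (f : Fin n → ℝ) : (∑ i ∈ T, |f i|) / √s ≤ l2 ((T : Set (Fin n)).indicator f) := by
  rw [div_le_iff₀ (by positivity), mul_comm]
  exact (sum_abs_le_sqrt_card_mul_l2_indicator T f).trans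
    (mul_le_mul_of_nonneg_right (Real.sqrt_le_sqrt (by exact_mod_cast hT)) (l2_nonneg _))

theorem l2_indicator_le_of_forall_mul_le {s : ℕ} (hs : 0 < s) {T : Finset (Fin n)} (hT : #T ≤ s)
    {f : Fin n → ℝ} {c : ℝ} (hc : 0 ≤ c) (hf : ∀ i ∈ T, s * |f i| ≤ c) :
    l2 ((T : Set (Fin n)).indicator f) ≤ c / √s := by
  have hs' : (0 : ℝ) < s := Nat.cast_pos.mpr hs
  refine le_of_sq_le_sq ?_ (by positivity)
  calc l2 ((T : Set (Fin n)).indicator f) ^ 2 = ∑ i ∈ T, f i ^ 2 := l2_sq_indicator T f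
    _ ≤ ∑ i ∈ T, (c / s) ^ 2 := sum_le_sum fun i hi => by
      rw [← sq_abs]
      exact pow_le_pow_left₀ (abs_nonneg _) ((le_div_iff₀' hs').mpr (hf i hi)) 2
    _ = #T * (c / s) ^ 2 := by rw [sum_const, nsmul_eq_mul]
    _ ≤ s * (c / s) ^ 2 := by gcongr
    _ = (c / √s) ^ 2 := by rw [div_pow, div_pow, Real.sq_sqrt hs'.le]; field_simp

theorem sum_abs_compl_le_of_l1_add_le {x h : Fin n → ℝ} {T : Finset (Fin n)}
    (hx : support x ⊆ T) (hle : l1 (x + h) ≤ l1 x) : ∑ i ∈ Tᶜ, |h i| ≤ ∑ i ∈ T, |h i| := by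
  have hxT : ∀ i ∈ Tᶜ, x i = 0 := fun i hi =>
    notMem_support.mp fun hxi => mem_compl.mp hi (hx hxi)
  have hl1_add : l1 (x + h) = ∑ i ∈ T, |x i + h i| + ∑ i ∈ Tᶜ, |h i| := by
    rw [l1, ← sum_add_sum_compl T]
    exact congrArg₂ _ rfl (sum_congr rfl fun i hi => by simp [hxT i hi])
  have hl1 : l1 x = ∑ i ∈ T, |x i| := by
    rw [l1, ← sum_add_sum_compl T, sum_eq_zero (s := Tᶜ) fun i hi => by simp [hxT i hi],
      add_zero]
  have htriangle : ∑ i ∈ T, |x i| - ∑ i ∈ T, |h i| ≤ ∑ i ∈ T, |x i + h i| := by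
    rw [← sum_sub_distrib]
    exact sum_le_sum fun i _ => abs_sub_abs_le_abs_add _ _
  linarith

end L1

section Blocks

variable {α β : Type*} [DecidableEq α]

theorem Finset.exists_subset_card_eq_forall_le [LinearOrder β] (w : α → β) {S : Finset α}
    {k : ℕ} (hk : k ≤ #S) : ∃ A ⊆ S, #A = k ∧ ∀ i ∈ S \ A, ∀ i' ∈ A, w i ≤ w i' := by
  induction k with
  | zero => exact ⟨∅, empty_subset _, card_empty, by simp⟩
  | succ k ih =>
    obtain ⟨A, hAS, hA, hmax⟩ := ih (by omega)
    have hne : (S \ A).Nonempty := by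
      rw [← card_pos, card_sdiff_of_subset hAS]
      omega
    obtain ⟨i₀, hi₀, hi₀max⟩ := (S \ A).exists_max_image w hne
    refine ⟨insert i₀ A, insert_subset (mem_sdiff.mp hi₀).1 hAS,
      by rw [card_insert_of_notMem (mem_sdiff.mp hi₀).2, hA], fun i hi i' hi' => ?_⟩
    have hiA : i ∈ S \ A := by
      simp only [mem_sdiff, mem_insert, not_or] at hi ⊢
      exact ⟨hi.1, hi.2.2⟩
    rcases mem_insert.mp hi' with rfl | hi'
    · exact hi₀max i hiA
    · exact hmax i hiA i' hi'

theorem exists_decreasing_blocks (w : α → ℝ) {s : ℕ} (hs : 0 < s) (S : Finset α) :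
    ∃ (m : ℕ) (T : ℕ → Finset α), (range (m + 1)).biUnion T = S ∧ (∀ j, T j ⊆ S) ∧
      Pairwise (Disjoint on T) ∧ (∀ j, #(T j) ≤ s) ∧
      ∀ j, ∀ i ∈ T (j + 1), s * w i ≤ ∑ i' ∈ T j, w i' := by
  induction S using Finset.strongInduction with
  | H S ih =>
  by_cases hS : #S ≤ s
  · refine ⟨0, fun j => if j = 0 then S else ∅, by simp, fun j => ?_, fun j k hjk => ?_,
      fun j => ?_, fun j i hi => by simp at hi⟩
    · dsimp only
      split_ifs <;> simp
    · simp only [onFun]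
      split_ifs <;> first | omega | simp
    · dsimp only
      split_ifs <;> simp [hS]
  obtain ⟨A, hAS, hA, hmax⟩ := exists_subset_card_eq_forall_le w (S := S) (k := s) (by omega)
  obtain ⟨m, T, hcover, hsub, hdisj, hcard, hsorted⟩ :=
    ih (S \ A) (sdiff_ssubset hAS (by rw [← card_pos]; omega))
  refine ⟨m + 1, fun | 0 => A | j + 1 => T j, ?_, ?_, ?_, ?_, ?_⟩
  · rw [range_add_one', biUnion_insert, map_eq_image, image_biUnion]
    exact (congrArg (A ∪ ·) hcover).trans (union_sdiff_of_subset hAS)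
  · rintro (_ | j)
    exacts [hAS, (hsub j).trans sdiff_subset]
  · rintro (_ | j) (_ | k) hjk
    · exact absurd rfl hjk
    · exact disjoint_of_subset_right (hsub k) disjoint_sdiff
    · exact disjoint_of_subset_left (hsub j) sdiff_disjoint
    · exact hdisj fun h => hjk (congrArg _ h)
  · rintro (_ | j)
    exacts [hA.le, hcard j]
  · rintro (_ | j) i hi
    · calc s * w i = ∑ _i' ∈ A, w i := by rw [sum_const, hA, nsmul_eq_mul]
        _ ≤ ∑ i' ∈ A, w i' := sum_le_sum (hmax i (hsub 0 hi))
    · exact hsorted j i hi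

end Blocks

theorem sum_l2_indicator_succ_le {n s m : ℕ} (hs : 0 < s) (f : Fin n → ℝ) {S : Finset (Fin n)}
    {T : ℕ → Finset (Fin n)} (hcover : (range (m + 1)).biUnion T = S)
    (hdisj : Pairwise (Disjoint on T)) (hcard : ∀ j, #(T j) ≤ s)
    (hsorted : ∀ j, ∀ i ∈ T (j + 1), s * |f i| ≤ ∑ i' ∈ T j, |f i'|) :
    ∑ j ∈ range m, l2 ((T (j + 1) : Set (Fin n)).indicator f) ≤ (∑ i ∈ S, |f i|) / √s :=
  calc ∑ j ∈ range m, l2 ((T (j + 1) : Set (Fin n)).indicator f)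
      ≤ ∑ j ∈ range m, (∑ i ∈ T j, |f i|) / √s := sum_le_sum fun j _ =>
        l2_indicator_le_of_forall_mul_le hs (hcard _) (sum_nonneg fun _ _ => abs_nonneg _)
          (hsorted j)
    _ ≤ ∑ j ∈ range (m + 1), (∑ i ∈ T j, |f i|) / √s :=
        sum_le_sum_of_subset_of_nonneg (range_subset_range.mpr m.le_succ) fun _ _ _ => by positivity
    _ = (∑ i ∈ S, |f i|) / √s := by
        rw [← sum_div, ← hcover, sum_biUnion (hdisj.set_pairwise _)]

namespace IsBRIP

variable {M N s : ℕ} {Φ : Matrix (Fin M) (Fin N) ℝ} {δ : ℝ}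

theorem mul_l2_le_of_cone (hΦ : IsBRIP Φ (2 * s) δ) (hδ : 0 ≤ 1 - (√2 + 1) * δ)
    {h : Fin N → ℝ} (hbox : ∀ i, |h i| ≤ 1) {T₀ : Finset (Fin N)} (hT₀ : #T₀ ≤ s)
    (hcone : ∑ i ∈ T₀ᶜ, |h i| ≤ ∑ i ∈ T₀, |h i|) :
    (1 - (√2 + 1) * δ) * l2 h ≤ 2 * √(1 + δ) * l2 (Φ *ᵥ h) := by
  rcases Nat.eq_zero_or_pos s with rfl | hs
  · have h0 : h = 0 := by
      rw [card_eq_zero.mp (Nat.le_zero.mp hT₀), compl_empty, sum_empty] at hcone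
      funext i
      exact abs_nonpos_iff.mp
        ((single_le_sum (fun j _ => abs_nonneg (h j)) (mem_univ i)).trans hcone)
    simp [h0, l2_zero]
  obtain ⟨m, T, hcover, hsub, hdisj, hcard, hsorted⟩ :=
    exists_decreasing_blocks (fun i => |h i|) hs T₀ᶜ
  set a := (T₀ : Set (Fin N)).indicator h
  set b := (T 0 : Set (Fin N)).indicator h
  set g := fun j => (T (j + 1) : Set (Fin N)).indicator h
  have hT₀T : ∀ j, Disjoint T₀ (T j) := fun j =>
    disjoint_of_subset_right (hsub j) disjoint_compl_right
  have hdecomp : h = a + b + ∑ j ∈ range m, g j := by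
    conv_lhs => rw [← indicator_add_sum_indicator_eq_self hcover hdisj h]
    rw [sum_range_succ', add_comm _ b, add_assoc]
  have htail : ∑ j ∈ range m, l2 (g j) ≤ l2 a := calc
    ∑ j ∈ range m, l2 (g j) ≤ (∑ i ∈ T₀ᶜ, |h i|) / √s :=
      sum_l2_indicator_succ_le hs h hcover hdisj hcard hsorted
    _ ≤ (∑ i ∈ T₀, |h i|) / √s := by gcongr
    _ ≤ l2 a := sum_abs_div_sqrt_le_l2_indicator hs hT₀ h
  have hab : Disjoint (support a) (support b) := disjoint_support_indicator (hT₀T 0) h h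
  have hbox_ab : ∀ i, |(a + b) i| ≤ 1 := fun i => by
    by_cases hi : i ∈ T₀
    · simp [a, b, hi, disjoint_left.mp (hT₀T 0) hi, hbox i]
    · by_cases hi' : i ∈ T 0 <;> simp [a, b, hi, hi', hbox i]
  have hkey := hΦ.mul_l2_add_le_of_sum_l2_le (ncard_support_indicator_le T₀ h |>.trans hT₀)
    (ncard_support_indicator_le _ h |>.trans (hcard 0))
    (fun j _ => ncard_support_indicator_le _ h |>.trans (hcard _)) hab
    (fun j _ => disjoint_support_indicator (hT₀T _) h h)
    (fun j _ => disjoint_support_indicator (hdisj (Nat.succ_ne_zero _).symm) h h) hbox_ab htail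
  rw [← hdecomp] at hkey
  have hh : l2 h ≤ 2 * l2 (a + b) := calc
    l2 h ≤ l2 (a + b) + ∑ j ∈ range m, l2 (g j) := by
      nth_rw 1 [hdecomp]
      exact (l2_add_le _ _).trans (add_le_add le_rfl (l2_sum_le _ _))
    _ ≤ l2 (a + b) + l2 (a + b) := add_le_add le_rfl (htail.trans (l2_le_l2_add_of_disjoint hab))
    _ = 2 * l2 (a + b) := by ring
  calc (1 - (√2 + 1) * δ) * l2 h ≤ (1 - (√2 + 1) * δ) * (2 * l2 (a + b)) := by gcongr
    _ = 2 * ((1 - (√2 + 1) * δ) * l2 (a + b)) := by ring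
    _ ≤ 2 * √(1 + δ) * l2 (Φ *ᵥ h) := by linarith

end IsBRIP

/-- If `y = Φ x_true + n` with `‖n‖₂ ≤ ε`, `x_true` binary with exactly `s`
nonzero entries, `Φ` satisfies the BRIP of order `2s` with constant `δ < √2 - 1`,
and `x*` is an optimal solution of the relaxed convex program
(minimize `‖x‖₁` s.t. `‖Φx - y‖₂ ≤ ε`, `0 ≤ x ≤ 1`), then
`‖x* - x_true‖₂ ≤ (4√(1+δ)/(1-(√2+1)δ)) ε`. -/
theorem stmt1 {M N s : ℕ} (Φ : Matrix (Fin M) (Fin N) ℝ) (y n : Fin M → ℝ)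
    (xtrue xstar : Fin N → ℝ) (ε δ : ℝ)
    (hy : y = Φ.mulVec xtrue + n) (hn : l2 n ≤ ε)
    (hbin : ∀ j, xtrue j = 0 ∨ xtrue j = 1)
    (hs : Set.ncard (Function.support xtrue) = s)
    (hδ : δ < Real.sqrt 2 - 1)
    (hBRIP : ∀ v : Fin N → ℝ, Set.ncard (Function.support v) ≤ 2 * s → (∀ i, |v i| ≤ 1) →
      (1 - δ) * (l2 v) ^ 2 ≤ (l2 (Φ.mulVec v)) ^ 2 ∧
      (l2 (Φ.mulVec v)) ^ 2 ≤ (1 + δ) * (l2 v) ^ 2)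
    (hfeas : l2 (Φ.mulVec xstar - y) ≤ ε ∧ ∀ j, 0 ≤ xstar j ∧ xstar j ≤ 1)
    (hopt : ∀ x : Fin N → ℝ, (l2 (Φ.mulVec x - y) ≤ ε ∧ ∀ j, 0 ≤ x j ∧ x j ≤ 1) →
      l1 xstar ≤ l1 x) :
    l2 (xstar - xtrue) ≤ (4 * Real.sqrt (1 + δ) / (1 - (Real.sqrt 2 + 1) * δ)) * ε := by
  have hbox_true : ∀ j, 0 ≤ xtrue j ∧ xtrue j ≤ 1 := fun j => by
    rcases hbin j with hj | hj <;> simp [hj]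
  have hfeas_true : l2 (Φ *ᵥ xtrue - y) ≤ ε := by rwa [hy, sub_add_cancel_left, l2_neg]
  have hcone := sum_abs_compl_le_of_l1_add_le (x := xtrue) (h := xstar - xtrue)
    (T := (support xtrue).toFinite.toFinset) (by simp)
    (by rw [add_sub_cancel]; exact hopt xtrue ⟨hfeas_true, hbox_true⟩)
  have htube : l2 (Φ *ᵥ (xstar - xtrue)) ≤ 2 * ε := calc
    l2 (Φ *ᵥ (xstar - xtrue)) = l2 ((Φ *ᵥ xstar - y) + n) := by
      rw [hy, mulVec_sub]; abel_nf
    _ ≤ 2 * ε := (l2_add_le _ _).trans (by linarith [hfeas.1])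
  have hden : 0 < 1 - (√2 + 1) * δ := by
    nlinarith [Real.sq_sqrt (zero_le_two : (0 : ℝ) ≤ 2), Real.sqrt_nonneg 2]
  have hΦ : IsBRIP Φ (2 * s) δ := hBRIP
  have hkey := hΦ.mul_l2_le_of_cone (h := xstar - xtrue) hden.le
    (fun i => abs_sub_le_of_nonneg_of_le (hfeas.2 i).1 (hfeas.2 i).2 (hbox_true i).1
      (hbox_true i).2) (by rw [← hs, Set.ncard_eq_toFinset_card]) hcone
  rw [div_mul_eq_mul_div, le_div_iff₀ hden]
  linarith [mul_le_mul_of_nonneg_left htube (by positivity : (0 : ℝ) ≤ 2 * √(1 + δ))]
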